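/- Suppose ΔA_1^T P_1 + P_1 ΔA_1 ⪯ U_1 for symmetric matrices P_1 ≻ 0 and U_1, and for i = 2,...,m, M_i ≻ 0 and G_i := ΔA_i^T M_i + M_i ΔA_i ≺ 0. Then ΔA_⊕^T P_⊗ + P_⊗ ΔA_⊕ ⪯ U_1 ⊗ M_2 ⊗ ... ⊗ M_m, where ΔA_⊕ = ⊕_{i=1}^m ΔA_i and P_⊗ = P_1 ⊗ M_2 ⊗ ... ⊗ M_m. -/

import Mathlib

open Matrix
open scoped Kronecker

/-- Kronecker product of a family of matrices, realized over Pi index types. -/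
noncomputable def kronFam {m : ℕ} {p q : Fin m → Type*} [∀ i, Fintype (p i)]
    (X : ∀ i, Matrix (p i) (q i) ℝ) : Matrix (∀ i, p i) (∀ i, q i) ℝ :=
  Matrix.of fun a b => ∏ i, X i (a i) (b i)

/-- Kronecker sum of a family: `⊕ᵢ Aᵢ = Σᵢ I ⊗ ⋯ ⊗ Aᵢ ⊗ ⋯ ⊗ I`. -/
noncomputable def kronSum {m : ℕ} {n : Fin m → Type*} [∀ i, Fintype (n i)] [∀ i, DecidableEq (n i)]
    (A : ∀ i, Matrix (n i) (n i) ℝ) : Matrix (∀ i, n i) (∀ i, n i) ℝ :=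
  ∑ i, kronFam (Function.update (fun j => (1 : Matrix (n j) (n j) ℝ)) i (A i))

open scoped MatrixOrder in
lemma Matrix.posSemidef_iff_eq_transpose_mul_self {n : Type*} [Fintype n] {A : Matrix n n ℝ} :
    A.PosSemidef ↔ ∃ B : Matrix n n ℝ, A = Bᴴ * B := by
  classical
  constructor
  · intro h
    obtain ⟨B, hB⟩ := CStarAlgebra.nonneg_iff_eq_star_mul_self.mp h.nonneg
    exact ⟨B, by rw [hB, star_eq_conjTranspose]⟩
  · rintro ⟨B, rfl⟩
    exact Matrix.posSemidef_conjTranspose_mul_self B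

section lems
variable {m : ℕ} {p q r : Fin m → Type*} [∀ i, Fintype (p i)] [∀ i, Fintype (q i)]

lemma kronFam_transpose (X : ∀ i, Matrix (p i) (q i) ℝ) :
    (kronFam X)ᵀ = kronFam (fun i => (X i)ᵀ) := rfl

lemma kronFam_conjTranspose (X : ∀ i, Matrix (p i) (q i) ℝ) :
    (kronFam X)ᴴ = kronFam (fun i => (X i)ᴴ) := by
  ext a b; simp [kronFam, conjTranspose_apply]

lemma kronFam_mul (X : ∀ i, Matrix (p i) (q i) ℝ) (Y : ∀ i, Matrix (q i) (r i) ℝ) :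
    kronFam X * kronFam Y = kronFam (fun i => X i * Y i) := by
  ext a b
  simp only [kronFam, Matrix.mul_apply, Matrix.of_apply]
  rw [Fintype.prod_sum]
  simp [Finset.prod_mul_distrib]

lemma kronFam_posSemidef {M : ∀ i, Matrix (p i) (p i) ℝ}
    (h : ∀ i, (M i).PosSemidef) : (kronFam M).PosSemidef := by
  have h' : ∀ i, ∃ B : Matrix (p i) (p i) ℝ, M i = Bᴴ * B := fun i =>
    (Matrix.posSemidef_iff_eq_transpose_mul_self).mp (h i)
  choose B hB using h'
  have : kronFam M = (kronFam B)ᴴ * kronFam B := by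
    rw [kronFam_conjTranspose, kronFam_mul]
    conv_lhs => rw [show M = fun i => (B i)ᴴ * B i from funext hB]
  rw [this]
  exact Matrix.posSemidef_conjTranspose_mul_self _

lemma kronFam_update_apply (M : ∀ i, Matrix (p i) (q i) ℝ) (i : Fin m)
    (Z : Matrix (p i) (q i) ℝ) (a : ∀ i, p i) (b : ∀ i, q i) :
    kronFam (Function.update M i Z) a b
      = Z (a i) (b i) * ∏ j ∈ Finset.univ.erase i, M j (a j) (b j) := by
  simp only [kronFam, Matrix.of_apply]
  rw [← Finset.mul_prod_erase _ _ (Finset.mem_univ i), Function.update_self]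
  congr 1
  exact Finset.prod_congr rfl fun j hj => by
    rw [Function.update_of_ne (Finset.ne_of_mem_erase hj)]

lemma kronFam_update_add (M : ∀ i, Matrix (p i) (q i) ℝ) (i : Fin m)
    (X Y : Matrix (p i) (q i) ℝ) :
    kronFam (Function.update M i (X + Y))
      = kronFam (Function.update M i X) + kronFam (Function.update M i Y) := by
  ext a b
  simp [kronFam_update_apply, Matrix.add_apply, add_mul]

lemma kronFam_update_neg (M : ∀ i, Matrix (p i) (q i) ℝ) (i : Fin m)
    (X : Matrix (p i) (q i) ℝ) :
    kronFam (Function.update M i (-X)) = -kronFam (Function.update M i X) := by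
  ext a b
  simp [kronFam_update_apply, Matrix.neg_apply, neg_mul]

end lems

lemma kron_posSemidef {n₁ n₂ : Type*} [Fintype n₁] [Fintype n₂]
    {A : Matrix n₁ n₁ ℝ} {Bm : Matrix n₂ n₂ ℝ}
    (hA : A.PosSemidef) (hB : Bm.PosSemidef) : (A ⊗ₖ Bm).PosSemidef := by
  obtain ⟨C, hC⟩ := Matrix.posSemidef_iff_eq_transpose_mul_self.mp hA
  obtain ⟨D, hD⟩ := Matrix.posSemidef_iff_eq_transpose_mul_self.mp hB
  have : A ⊗ₖ Bm = (C ⊗ₖ D)ᴴ * (C ⊗ₖ D) := by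
    rw [hC, hD, Matrix.mul_kronecker_mul]
    congr 1
  rw [this]
  exact Matrix.posSemidef_conjTranspose_mul_self _

lemma kron_transpose {n₁ n₂ k₁ k₂ : Type*} (A : Matrix n₁ k₁ ℝ) (B : Matrix n₂ k₂ ℝ) :
    (A ⊗ₖ B)ᵀ = Aᵀ ⊗ₖ Bᵀ := rfl

lemma kron_neg {n₁ n₂ k₁ k₂ : Type*} (A : Matrix n₁ k₁ ℝ) (B : Matrix n₂ k₂ ℝ) :
    A ⊗ₖ (-B) = -(A ⊗ₖ B) := by
  ext a b; simp [kroneckerMap_apply]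

lemma sub_kron {n₁ n₂ k₁ k₂ : Type*} (A B : Matrix n₁ k₁ ℝ) (C : Matrix n₂ k₂ ℝ) :
    (A - B) ⊗ₖ C = A ⊗ₖ C - B ⊗ₖ C := by
  ext a b; simp [kroneckerMap_apply, sub_mul]

lemma kronecker_sum_right {n₁ n₂ k₁ k₂ : Type*} [Fintype n₁] [Fintype n₂] {ι : Type*}
    (s : Finset ι) (A : Matrix n₁ k₁ ℝ) (f : ι → Matrix n₂ k₂ ℝ) :
    A ⊗ₖ (∑ i ∈ s, f i) = ∑ i ∈ s, A ⊗ₖ f i := by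
  ext a b
  simp [kroneckerMap_apply, Finset.mul_sum, Matrix.sum_apply]

lemma posSemidef_sum {n₂ : Type*} [Fintype n₂] {ι : Type*} (s : Finset ι)
    (f : ι → Matrix n₂ n₂ ℝ) (h : ∀ i ∈ s, (f i).PosSemidef) :
    (∑ i ∈ s, f i).PosSemidef :=
  Finset.sum_induction f _ (fun _ _ ha hb => ha.add hb) Matrix.PosSemidef.zero h

/-- Layer 1 is written explicitly; layers 2,…,m are the family `M, ΔA` over `Fin m`. -/
theorem stmt9 {n₁ : Type*} [Fintype n₁] [DecidableEq n₁]
    {m : ℕ} {n : Fin m → Type*} [∀ i, Fintype (n i)] [∀ i, DecidableEq (n i)]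
    (ΔA₁ P₁ U₁ : Matrix n₁ n₁ ℝ) (ΔA M : ∀ i, Matrix (n i) (n i) ℝ)
    (hP₁ : P₁.PosDef) (hU₁ : U₁.IsHermitian)
    (hU : (U₁ - (ΔA₁ᵀ * P₁ + P₁ * ΔA₁)).PosSemidef)
    (hM : ∀ i, (M i).PosDef)
    (hG : ∀ i, (-((ΔA i)ᵀ * M i + M i * ΔA i)).PosDef) :
    (U₁ ⊗ₖ kronFam M
      - ((ΔA₁ ⊗ₖ (1 : Matrix (∀ i, n i) (∀ i, n i) ℝ)
            + (1 : Matrix n₁ n₁ ℝ) ⊗ₖ kronSum ΔA)ᵀ * (P₁ ⊗ₖ kronFam M)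
          + (P₁ ⊗ₖ kronFam M) * (ΔA₁ ⊗ₖ (1 : Matrix (∀ i, n i) (∀ i, n i) ℝ)
            + (1 : Matrix n₁ n₁ ℝ) ⊗ₖ kronSum ΔA))).PosSemidef := by
  classical
  set K := kronFam M with hK
  set S := kronSum ΔA with hS
  -- the key computation for the Kronecker-sum part
  have hSK : Sᵀ * K + K * S
      = ∑ i, kronFam (Function.update M i ((ΔA i)ᵀ * M i + M i * ΔA i)) := by
    rw [hS, hK, kronSum, Matrix.transpose_sum, Finset.sum_mul, Finset.mul_sum,
      ← Finset.sum_add_distrib]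
    refine Finset.sum_congr rfl fun i _ => ?_
    rw [kronFam_transpose, kronFam_mul, kronFam_mul]
    have h1 : (fun j => (Function.update (fun k => (1 : Matrix (n k) (n k) ℝ)) i (ΔA i) j)ᵀ * M j)
        = Function.update M i ((ΔA i)ᵀ * M i) := by
      funext j
      rcases eq_or_ne j i with rfl | h
      · simp
      · simp [Function.update_of_ne h]
    have h2 : (fun j => M j * Function.update (fun k => (1 : Matrix (n k) (n k) ℝ)) i (ΔA i) j)
        = Function.update M i (M i * ΔA i) := by
      funext j
      rcases eq_or_ne j i with rfl | h
      · simp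
      · simp [Function.update_of_ne h]
    rw [h1, h2, kronFam_update_add]
  have hneg : ∑ i, P₁ ⊗ₖ kronFam (Function.update M i (-((ΔA i)ᵀ * M i + M i * ΔA i)))
      = -(P₁ ⊗ₖ (Sᵀ * K + K * S)) := by
    rw [← kronecker_sum_right, hSK]
    rw [show (∑ i, kronFam (Function.update M i (-((ΔA i)ᵀ * M i + M i * ΔA i))))
        = -∑ i, kronFam (Function.update M i ((ΔA i)ᵀ * M i + M i * ΔA i)) by
      rw [← Finset.sum_neg_distrib]
      exact Finset.sum_congr rfl fun i _ => kronFam_update_neg M i _]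
    rw [kron_neg]
  have key : (U₁ ⊗ₖ K
      - ((ΔA₁ ⊗ₖ (1 : Matrix (∀ i, n i) (∀ i, n i) ℝ)
            + (1 : Matrix n₁ n₁ ℝ) ⊗ₖ S)ᵀ * (P₁ ⊗ₖ K)
          + (P₁ ⊗ₖ K) * (ΔA₁ ⊗ₖ (1 : Matrix (∀ i, n i) (∀ i, n i) ℝ)
            + (1 : Matrix n₁ n₁ ℝ) ⊗ₖ S)))
      = (U₁ - (ΔA₁ᵀ * P₁ + P₁ * ΔA₁)) ⊗ₖ K
        + ∑ i, P₁ ⊗ₖ kronFam (Function.update M i (-((ΔA i)ᵀ * M i + M i * ΔA i))) := by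
    rw [hneg, transpose_add, kron_transpose, kron_transpose, transpose_one, transpose_one,
      add_mul, mul_add, ← Matrix.mul_kronecker_mul, ← Matrix.mul_kronecker_mul,
      ← Matrix.mul_kronecker_mul, ← Matrix.mul_kronecker_mul, sub_kron, add_kronecker,
      Matrix.kronecker_add]
    simp only [Matrix.one_mul, Matrix.mul_one]
    abel
  rw [key]
  refine Matrix.PosSemidef.add
    (kron_posSemidef hU (kronFam_posSemidef fun i => (hM i).posSemidef))
    (posSemidef_sum _ _ fun i _ => ?_)
  refine kron_posSemidef hP₁.posSemidef (kronFam_posSemidef fun j => ?_)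
  rcases eq_or_ne j i with rfl | h
  · rw [Function.update_self]
    exact (hG j).posSemidef
  · rw [Function.update_of_ne h]
    exact (hM j).posSemidef
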